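/- Let f be monotone and α-submodular with f(∅)=0 and knapsack budget B. If for the current solution S and any element v with c(S∪{v}) ≤ B the generalized greedy picks v* maximizing (f(S∪{v})-f(S))/c(v), then f(S ∪ {v*}) - f(S) ≥ α · (c(v*)/B) · (f(OPT) - f(S)). -/

import Mathlib

/-!
Adding the elements of `OPT \ S` to `S` one at a time, `α`-submodularity bounds each increment
by `1/α` times that element's marginal gain over `S`. By maximality of the greedy density `ρ`, each
such gain is at most `ρ · c v`, and these costs add up to at most `B`; so
`α (f OPT - f S) ≤ ρ B`, while the greedy gain is exactly `ρ · c v*`.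
-/

open Finset

section Greedy

variable {V : Type*} [DecidableEq V]

theorem mul_sub_le_sum_marginal (f : Finset V → ℝ) (α : ℝ)
    (hsub : ∀ (A B : Finset V) (v : V), A ⊆ B → v ∉ B →
      f (insert v A) - f A ≥ α * (f (insert v B) - f B))
    (S T : Finset V) (hdisj : Disjoint T S) :
    α * (f (S ∪ T) - f S) ≤ ∑ v ∈ T, (f (insert v S) - f S) := by
  induction T using Finset.induction_on with
  | empty => simp
  | insert a T haT ih =>
    obtain ⟨haS, hTS⟩ := disjoint_insert_left.mp hdisj
    have hstep := hsub S (S ∪ T) a subset_union_left (by simp [haS, haT])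
    rw [sum_insert haT, union_insert]
    linarith [ih hTS]

theorem mul_sub_le_sum_marginal_sdiff (f : Finset V → ℝ)
    (hmono : ∀ A B : Finset V, A ⊆ B → f A ≤ f B) (α : ℝ) (hα : 0 < α)
    (hsub : ∀ (A B : Finset V) (v : V), A ⊆ B → v ∉ B →
      f (insert v A) - f A ≥ α * (f (insert v B) - f B))
    (S T : Finset V) :
    α * (f T - f S) ≤ ∑ v ∈ T \ S, (f (insert v S) - f S) := calc
  α * (f T - f S) ≤ α * (f (S ∪ (T \ S)) - f S) := by
    gcongr
    exact hmono _ _ (by simp [subset_union_right])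
  _ ≤ _ := mul_sub_le_sum_marginal f α hsub S (T \ S) sdiff_disjoint

end Greedy

theorem sum_le_mul_sum_of_div_le {ι : Type*} (s : Finset ι) (g c : ι → ℝ) (ρ : ℝ)
    (hc : ∀ i ∈ s, 0 < c i) (hρ : ∀ i ∈ s, g i / c i ≤ ρ) :
    ∑ i ∈ s, g i ≤ ρ * ∑ i ∈ s, c i := by
  rw [mul_sum]
  exact sum_le_sum fun i hi => (div_le_iff₀ (hc i hi)).mp (hρ i hi)

theorem stmt_16_general {V : Type*} [DecidableEq V] (f : Finset V → ℝ)
    (hmono : ∀ A B : Finset V, A ⊆ B → f A ≤ f B)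
    (α : ℝ) (hα : 0 < α)
    (hsub : ∀ (A B : Finset V) (v : V), A ⊆ B → v ∉ B →
      f (insert v A) - f A ≥ α * (f (insert v B) - f B))
    (c : V → ℝ) (hc : ∀ v, 0 < c v) (B : ℝ) (hB : 0 < B)
    (OPT : Finset V) (hOPT : ∑ v ∈ OPT, c v ≤ B)
    (S : Finset V)
    (hfit : ∀ v ∈ OPT \ S, ∑ u ∈ insert v S, c u ≤ B)
    (vstar : V)
    (hmax : ∀ v, v ∉ S → ∑ u ∈ insert v S, c u ≤ B →
      (f (insert v S) - f S) / c v ≤ (f (insert vstar S) - f S) / c vstar) :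
    f (insert vstar S) - f S ≥ α * (c vstar / B) * (f OPT - f S) := by
  set ρ := (f (insert vstar S) - f S) / c vstar
  have hρ : 0 ≤ ρ := div_nonneg (sub_nonneg.mpr (hmono _ _ (subset_insert _ _))) (hc vstar).le
  have hcost : ∑ v ∈ OPT \ S, c v ≤ B :=
    (sum_le_sum_of_subset_of_nonneg sdiff_subset fun v _ _ => (hc v).le).trans hOPT
  have hgain : α * (f OPT - f S) ≤ ρ * B := calc
    α * (f OPT - f S) ≤ ∑ v ∈ OPT \ S, (f (insert v S) - f S) :=
      mul_sub_le_sum_marginal_sdiff f hmono α hα hsub S OPT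
    _ ≤ ρ * ∑ v ∈ OPT \ S, c v :=
      sum_le_mul_sum_of_div_le _ _ c ρ (fun v _ => hc v)
        fun v hv => hmax v (mem_sdiff.mp hv).2 (hfit v hv)
    _ ≤ ρ * B := by gcongr
  calc α * (c vstar / B) * (f OPT - f S) = c vstar / B * (α * (f OPT - f S)) := by ring
    _ ≤ c vstar / B * (ρ * B) := by have := hc vstar; gcongr
    _ = f (insert vstar S) - f S := by
      simp only [ρ]; field_simp [(hc vstar).ne', hB.ne']

/-- Per-step gain of the generalized greedy algorithm under a knapsack constraint:
if `f` is monotone, `α`-submodular (`0 < α ≤ 1`) with `f ∅ = 0`, `OPT` is feasible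
(`c(OPT) ≤ B`), every element of `OPT \ S` individually fits, and `v*` maximizes the
density `(f(S ∪ {v}) - f S)/c v` among fitting elements, then
`f (S ∪ {v*}) - f S ≥ α · (c v*/B) · (f OPT - f S)`. -/
theorem stmt_16 {V : Type*} [DecidableEq V] (f : Finset V → ℝ)
    (hmono : ∀ A B : Finset V, A ⊆ B → f A ≤ f B) (hf0 : f ∅ = 0)
    (α : ℝ) (hα : 0 < α) (hα1 : α ≤ 1)
    (hsub : ∀ (A B : Finset V) (v : V), A ⊆ B → v ∉ B →
      f (insert v A) - f A ≥ α * (f (insert v B) - f B))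
    (c : V → ℝ) (hc : ∀ v, 0 < c v) (B : ℝ) (hB : 0 < B)
    (OPT : Finset V) (hOPT : ∑ v ∈ OPT, c v ≤ B)
    (S : Finset V)
    (hfit : ∀ v ∈ OPT \ S, ∑ u ∈ insert v S, c u ≤ B)
    (vstar : V) (hvS : vstar ∉ S)
    (hmax : ∀ v, v ∉ S → ∑ u ∈ insert v S, c u ≤ B →
      (f (insert v S) - f S) / c v ≤ (f (insert vstar S) - f S) / c vstar) :
    f (insert vstar S) - f S ≥ α * (c vstar / B) * (f OPT - f S) :=
  stmt_16_general f hmono α hα hsub c hc B hB OPT hOPT S hfit vstar hmax
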